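/- Classify valid RVT words by their last letter and count with multiplicity: for k ≥ 1 let r_k, v_k, t_k, l_k, s_k denote the number of valid words of length k ending in R, in V, in T₁, in one of L₁/L₂/L₃, and in T₂, respectively. Then the counts satisfy the recurrences r_(k+1) = v_(k+1) = r_k + v_k + t_k + l_k + s_k, t_(k+1) = v_k + t_k + l_k, l_(k+1) = v_k + t_k + 3·l_k + s_k, s_(k+1) = l_k + s_k, with initial values (r₁, v₁, t₁, l₁, s₁) = (1, 0, 0, 0, 0). -/

import Mathlib

inductive RVT : Type
  | R | V | T1 | T2 | L1 | L2 | L3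
  deriving DecidableEq, Repr

open RVT in
/-- The successor (spelling) relation of the RVT coding system. -/
def RVT.succs : RVT → List RVT
  | R => [R, V]
  | V => [R, V, T1, L1]
  | T1 => [R, V, T1, L1]
  | T2 => [R, V, T2, L3]
  | L1 => [R, V, T1, T2, L1, L2, L3]
  | L2 => [R, V, T1, T2, L1, L2, L3]
  | L3 => [R, V, T1, T2, L1, L2, L3]

/-- A word is a valid RVT code if it starts with `R` and each letter is a
legal successor of the previous one. -/
def ValidRVT (w : List RVT) : Prop :=
  w.head? = some RVT.R ∧ List.Chain' (fun a b => b ∈ a.succs) w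

/-- Number of valid RVT words of length `k` whose last letter satisfies `P`. -/
noncomputable def validCountEnd (k : ℕ) (P : RVT → Prop) : ℕ :=
  Nat.card {w : List RVT // ValidRVT w ∧ w.length = k ∧
    ∃ a, w.getLast? = some a ∧ P a}

noncomputable def rCount (k : ℕ) : ℕ := validCountEnd k (· = RVT.R)
noncomputable def vCount (k : ℕ) : ℕ := validCountEnd k (· = RVT.V)
noncomputable def tCount (k : ℕ) : ℕ := validCountEnd k (· = RVT.T1)
noncomputable def lCount (k : ℕ) : ℕ :=
  validCountEnd k (fun a => a = RVT.L1 ∨ a = RVT.L2 ∨ a = RVT.L3)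
noncomputable def sCount (k : ℕ) : ℕ := validCountEnd k (· = RVT.T2)

/-!
Appending a letter `b` is a bijection from the valid words of length `k ≥ 1` whose last letter
admits `b` as successor onto the valid words of length `k + 1` ending in `b` (for `k = 0` it
fails, since the empty word has no last letter). Splitting the former set by its last letter,
each count at length `k + 1` is the sum of the counts at length `k` over the predecessors of `b`;
the recurrences are these sums read off the successor table.
-/

open RVT Finset

instance : Fintype RVT :=
  ⟨⟨{R, V, T1, T2, L1, L2, L3}, by decide⟩, fun a => by cases a <;> decide⟩

theorem RVT.sum_univ {M : Type*} [AddCommMonoid M] (f : RVT → M) :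
    ∑ a, f a = f R + f V + f T1 + f T2 + f L1 + f L2 + f L3 := by
  simp [Finset.univ, Fintype.elems, add_assoc]

def validWordsEnd (k : ℕ) (P : RVT → Prop) : Set (List RVT) :=
  {w | ValidRVT w ∧ w.length = k ∧ ∃ a, w.getLast? = some a ∧ P a}

theorem validCountEnd_eq_card (k : ℕ) (P : RVT → Prop) :
    validCountEnd k P = Nat.card (validWordsEnd k P) := rfl

theorem validWordsEnd_finite (k : ℕ) (P : RVT → Prop) : (validWordsEnd k P).Finite :=
  (List.finite_length_eq RVT k).subset fun _ hw => hw.2.1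

theorem validRVT_append_singleton {w : List RVT} (hw : w ≠ []) (b : RVT) :
    ValidRVT (w ++ [b]) ↔ ValidRVT w ∧ ∀ a ∈ w.getLast?, b ∈ a.succs := by
  rw [ValidRVT, ValidRVT, List.head?_append_of_ne_nil _ hw, and_assoc]
  exact and_congr_right fun _ => List.isChain_append.trans <| and_congr_right fun _ => by simp

theorem validWordsEnd_succ {k : ℕ} (hk : 1 ≤ k) (b : RVT) :
    validWordsEnd (k + 1) (· = b) = (· ++ [b]) '' validWordsEnd k (b ∈ ·.succs) := by
  ext w'
  constructor
  · rintro ⟨hvalid, hlen, _, hlast, rfl⟩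
    obtain ⟨w, rfl⟩ := List.getLast?_eq_some_iff.mp hlast
    have hw : w ≠ [] := by rintro rfl; simp at hlen; omega
    obtain ⟨hvalid, hsucc⟩ := (validRVT_append_singleton hw _).mp hvalid
    refine ⟨w, ⟨hvalid, by simpa using hlen, _, List.getLast?_eq_some_getLast hw, ?_⟩, rfl⟩
    exact hsucc _ (List.getLast?_eq_some_getLast hw)
  · rintro ⟨w, ⟨hvalid, hlen, a, hlast, hsucc⟩, rfl⟩
    have hw : w ≠ [] := by rintro rfl; simp at hlast
    refine ⟨(validRVT_append_singleton hw b).mpr ⟨hvalid, ?_⟩, by simpa, b, by simp, rfl⟩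
    simpa [hlast]

theorem validCountEnd_succ {k : ℕ} (hk : 1 ≤ k) (b : RVT) :
    validCountEnd (k + 1) (· = b) = validCountEnd k (b ∈ ·.succs) := by
  rw [validCountEnd_eq_card, validWordsEnd_succ hk,
    Nat.card_image_of_injective (List.append_left_injective [b])]
  rfl

theorem getLast?_eq_of_mem_validWordsEnd {k : ℕ} {a : RVT} {w : List RVT}
    (hw : w ∈ validWordsEnd k (· = a)) : w.getLast? = some a := by
  obtain ⟨_, _, _, h, rfl⟩ := hw
  exact h

theorem validCountEnd_eq_sum (k : ℕ) (P : RVT → Prop) [DecidablePred P] :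
    validCountEnd k P = ∑ a with P a, validCountEnd k (· = a) := by
  have : ∀ a, Finite (validWordsEnd k (· = a)) := fun a => (validWordsEnd_finite k _).to_subtype
  let f : (Σ a : {a // P a}, validWordsEnd k (· = a.1)) → validWordsEnd k P := fun x =>
    ⟨x.2.1, x.2.2.1, x.2.2.2.1, x.1.1, getLast?_eq_of_mem_validWordsEnd x.2.2, x.1.2⟩
  have hf : Function.Bijective f := by
    constructor
    · intro x y h
      have hw : x.2.1 = y.2.1 := congrArg Subtype.val h
      refine Sigma.subtype_ext (Subtype.ext (Option.some.inj ?_)) hw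
      rw [← getLast?_eq_of_mem_validWordsEnd x.2.2, ← getLast?_eq_of_mem_validWordsEnd y.2.2, hw]
    · rintro ⟨w, hvalid, hlen, a, ha, hP⟩
      exact ⟨⟨⟨a, hP⟩, w, hvalid, hlen, a, ha, rfl⟩, rfl⟩
  rw [validCountEnd_eq_card, ← Nat.card_eq_of_bijective f hf, Nat.card_sigma,
    Finset.sum_subtype (p := P) _ (by simp) fun a => validCountEnd k (· = a)]
  rfl

theorem validCountEnd_one (P : RVT → Prop) [Decidable (P R)] :
    validCountEnd 1 P = if P R then 1 else 0 := by
  have : validWordsEnd 1 P = {w | w = [R] ∧ P R} := by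
    ext w
    constructor
    · rintro ⟨⟨hhead, -⟩, hlen, a, hlast, hP⟩
      obtain ⟨c, rfl⟩ := List.length_eq_one_iff.mp hlen
      simp_all
    · rintro ⟨rfl, hP⟩
      exact ⟨⟨rfl, List.isChain_singleton R⟩, rfl, R, rfl, hP⟩
  rw [validCountEnd_eq_card, this]
  split_ifs with h <;> simp [h]

theorem validCountEnd_succ_eq_sum {k : ℕ} (hk : 1 ≤ k) (b : RVT) :
    validCountEnd (k + 1) (· = b) = ∑ a with b ∈ a.succs, validCountEnd k (· = a) :=
  (validCountEnd_succ hk b).trans (validCountEnd_eq_sum k _)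

theorem lCount_eq (k : ℕ) :
    lCount k = validCountEnd k (· = L1) + validCountEnd k (· = L2) + validCountEnd k (· = L3) := by
  rw [lCount, validCountEnd_eq_sum, sum_filter, RVT.sum_univ]
  simp

theorem last_letter_recurrences :
    (rCount 1 = 1 ∧ vCount 1 = 0 ∧ tCount 1 = 0 ∧ lCount 1 = 0 ∧
      sCount 1 = 0) ∧
    ∀ k : ℕ, 1 ≤ k →
      rCount (k + 1) = rCount k + vCount k + tCount k + lCount k + sCount k ∧
      vCount (k + 1) = rCount k + vCount k + tCount k + lCount k + sCount k ∧
      tCount (k + 1) = vCount k + tCount k + lCount k ∧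
      lCount (k + 1) = vCount k + tCount k + 3 * lCount k + sCount k ∧
      sCount (k + 1) = lCount k + sCount k := by
  refine ⟨by simp [rCount, vCount, tCount, lCount_eq, sCount, validCountEnd_one], fun k hk => ?_⟩
  simp only [rCount, vCount, tCount, sCount, lCount_eq, validCountEnd_succ_eq_sum hk, sum_filter,
    RVT.sum_univ]
  simp [RVT.succs]
  omega
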